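/- Let x be a coverable string and let w be its shortest cover (a cover of minimum length). Then w is superprimitive, i.e., w has no cover. Equivalently, if C is the minimal cover array of a string x of length n and C[i] ≠ 0 for some 1 ≤ i ≤ n, then C[C[i]] = 0. -/

import Mathlib

/-- `w` is a (proper, aligned-style) cover of `x`: `|w| < |x|` and there is a set `P`
of 1-based starting positions in `{1,…,n−m+1}` such that `w` occurs at every
position of `P` and the occurrences cover every position `1,…,n`. -/
def IsCover {α : Type*} (w x : List α) : Prop :=
  w.length < x.length ∧
  ∃ P : Finset ℕ,
    (∀ i ∈ P, 1 ≤ i ∧ i ≤ x.length - w.length + 1) ∧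
    (∀ i ∈ P, (x.drop (i - 1)).take w.length = w) ∧
    (P.biUnion fun i => Finset.Icc i (i + w.length - 1)) = Finset.Icc 1 x.length

/-- `u` is a border of `x`: `u ≠ x` and `u` is both a prefix and a suffix of `x`. -/
def IsBorder {α : Type*} (u x : List α) : Prop :=
  u ≠ x ∧ u <+: x ∧ u <:+ x

/-- `C` is the minimal cover array of `x` (1-based): for `1 ≤ i ≤ |x|`, `C i` is the
length of the shortest cover of `x[1..i]` if one exists, and `0` otherwise. -/
def IsMinCoverArray {α : Type*} (x : List α) (C : ℕ → ℕ) : Prop :=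
  ∀ i, 1 ≤ i → i ≤ x.length →
    ((∀ w : List α, ¬ IsCover w (x.take i)) ∧ C i = 0) ∨
    (∃ w : List α, IsCover w (x.take i) ∧ C i = w.length ∧
      ∀ v : List α, IsCover v (x.take i) → w.length ≤ v.length)

/-- `C` is the maximal cover array of `x` (1-based): for `1 ≤ i ≤ |x|`, `C i` is the
length of the longest cover of `x[1..i]` if one exists, and `0` otherwise. -/
def IsMaxCoverArray {α : Type*} (x : List α) (C : ℕ → ℕ) : Prop :=
  ∀ i, 1 ≤ i → i ≤ x.length →
    ((∀ w : List α, ¬ IsCover w (x.take i)) ∧ C i = 0) ∨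
    (∃ w : List α, IsCover w (x.take i) ∧ C i = w.length ∧
      ∀ v : List α, IsCover v (x.take i) → v.length ≤ w.length)

/-- `B` is the border array of `x` (1-based): for `1 ≤ i ≤ |x|`, `B i` is the length
of the longest border of `x[1..i]`. -/
def IsBorderArray {α : Type*} (x : List α) (B : ℕ → ℕ) : Prop :=
  ∀ i, 1 ≤ i → i ≤ x.length →
    ∃ u : List α, IsBorder u (x.take i) ∧ B i = u.length ∧
      ∀ v : List α, IsBorder v (x.take i) → v.length ≤ u.length

/-- Position `j` of the cover array `C` (of a string of length `n`) is totally covered. -/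
def TotallyCovered (n : ℕ) (C : ℕ → ℕ) (j : ℕ) : Prop :=
  C j ≠ 0 ∧ ∃ i, j < i ∧ i ≤ n ∧ C i ≠ 0 ∧
    i - C i + 1 ≤ j - C j + 1 ∧ j - C j + 1 < j

/-- `CP` is the pruned minimal cover array obtained from `C`: entries at totally
covered positions are set to `0`, all other entries are kept. -/
def IsPrunedCoverArray (n : ℕ) (C CP : ℕ → ℕ) : Prop :=
  ∀ j, 1 ≤ j → j ≤ n →
    (TotallyCovered n C j → CP j = 0) ∧ (¬ TotallyCovered n C j → CP j = C j)

/-- The cover-graph relation `R_γ` on positions `{1,…,n}` induced by the array `γ`: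
`p R_γ q` iff there are `i` with `γ i ≠ 0` and `1 ≤ j ≤ γ i` with `{p,q} = {j, i−γ i + j}`. -/
def CoverRel (n : ℕ) (γ : ℕ → ℕ) (p q : ℕ) : Prop :=
  ∃ i j, 1 ≤ i ∧ i ≤ n ∧ γ i ≠ 0 ∧ 1 ≤ j ∧ j ≤ γ i ∧
    ({p, q} : Set ℕ) = {j, i - γ i + j}


/-!
Covering is transitive: the occurrences of `u` inside each occurrence of `w` in `x` cover `x`.
Hence a cover of the shortest cover `w` of `x` would be a strictly shorter cover of `x`.
For the array form, a cover of `x[1..i]` is a prefix of it, so the shortest one is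
`x[1..C i]`, and `C (C i) ≠ 0` would exhibit a cover of it.
-/

theorem List.take_drop_add_of_take_drop {α : Type*} {x w u : List α} {a b : ℕ}
    (hw : (x.drop a).take w.length = w) (hu : (w.drop b).take u.length = u)
    (hb : b + u.length ≤ w.length) : (x.drop (a + b)).take u.length = u := by
  have hinside : ((x.drop a).drop b).take u.length
      = (((x.drop a).take w.length).drop b).take u.length := by
    rw [List.drop_take, List.take_take]
    congr 1
    omega
  rw [← List.drop_drop, hinside, hw, hu]

namespace IsCover

variable {α : Type*}

theorem take_length_eq {w x : List α} (h : IsCover w x) : x.take w.length = w := by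
  obtain ⟨hlt, P, hbound, hocc, hcov⟩ := h
  have h1 : 1 ∈ P.biUnion fun i => Finset.Icc i (i + w.length - 1) := by
    rw [hcov]; exact Finset.mem_Icc.mpr ⟨le_rfl, by omega⟩
  obtain ⟨p, hp, hmem⟩ := Finset.mem_biUnion.mp h1
  have hp1 : p = 1 := by have := hbound p hp; rw [Finset.mem_Icc] at hmem; omega
  simpa [hp1] using hocc p hp

theorem trans {u w x : List α} (huw : IsCover u w) (hwx : IsCover w x) : IsCover u x := by
  obtain ⟨hm, Q, hQbound, hQocc, hQcov⟩ := huw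
  obtain ⟨hk, P, hPbound, hPocc, hPcov⟩ := hwx
  refine ⟨hm.trans hk, (P ×ˢ Q).image (fun pq => pq.1 + pq.2 - 1), ?_, ?_, ?_⟩
  · simp only [Finset.mem_image, Finset.mem_product]
    rintro _ ⟨⟨p, q⟩, ⟨hp, hq⟩, rfl⟩
    have := hPbound p hp
    have := hQbound q hq
    omega
  · simp only [Finset.mem_image, Finset.mem_product]
    rintro _ ⟨⟨p, q⟩, ⟨hp, hq⟩, rfl⟩
    have := hPbound p hp
    have := hQbound q hq
    have hshift : p + q - 1 - 1 = (p - 1) + (q - 1) := by omega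
    rw [hshift]
    exact List.take_drop_add_of_take_drop (hPocc p hp) (hQocc q hq) (by omega)
  · ext t
    simp only [Finset.mem_biUnion, Finset.mem_image, Finset.mem_product, Finset.mem_Icc]
    constructor
    · rintro ⟨_, ⟨⟨p, q⟩, ⟨hp, hq⟩, rfl⟩, ht⟩
      have := hPbound p hp
      have := hQbound q hq
      omega
    · intro ht
      obtain ⟨p, hp, htp⟩ := Finset.mem_biUnion.mp (hPcov ▸ Finset.mem_Icc.mpr ht)
      have := hPbound p hp
      rw [Finset.mem_Icc] at htp
      have hrel : t - p + 1 ∈ Finset.Icc 1 w.length := Finset.mem_Icc.mpr (by omega)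
      obtain ⟨q, hq, htq⟩ := Finset.mem_biUnion.mp (hQcov ▸ hrel)
      have := hQbound q hq
      rw [Finset.mem_Icc] at htq
      exact ⟨p + q - 1, ⟨⟨p, q⟩, ⟨hp, hq⟩, rfl⟩, by omega⟩

theorem not_isCover_of_shortest {w x : List α} (hwx : IsCover w x)
    (hmin : ∀ v, IsCover v x → w.length ≤ v.length) (u : List α) : ¬ IsCover u w :=
  fun huw => (hmin u (huw.trans hwx)).not_gt huw.1

end IsCover

/-- The shortest cover of a coverable string is superprimitive;
equivalently, if `C` is a minimal cover array and `C i ≠ 0`, then `C (C i) = 0`. -/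
theorem shortest_cover_superprimitive (α : Type*) :
    (∀ x w : List α, IsCover w x →
      (∀ v : List α, IsCover v x → w.length ≤ v.length) →
      ∀ u : List α, ¬ IsCover u w) ∧
    (∀ (x : List α) (C : ℕ → ℕ), IsMinCoverArray x C →
      ∀ i, 1 ≤ i → i ≤ x.length → C i ≠ 0 → C (C i) = 0) := by
  refine ⟨fun x w => IsCover.not_isCover_of_shortest, ?_⟩
  intro x C hC i hi1 hin hCi
  rcases hC i hi1 hin with ⟨_, hzero⟩ | ⟨w, hw, hCw, hmin⟩
  · exact absurd hzero hCi
  have hwi : w.length < i := by simpa [hin] using hw.1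
  have hprefix : x.take w.length = w := by
    simpa [List.take_take, hwi.le] using hw.take_length_eq
  rw [hCw]
  rcases hC w.length (by omega) (by omega) with ⟨_, hzero⟩ | ⟨v, hv, -, -⟩
  · exact hzero
  · exact absurd (hprefix ▸ hv) (hw.not_isCover_of_shortest hmin v)
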